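/- arXiv:1703.02827 — 2 statements merged into one kernel-verified Lean document; each statement's English description precedes it below -/
import Mathlib

section
/- Let d ≥ 10 and let I = I(Z_d) be the ideal of a quasi star configuration. Then the Waldschmidt constant satisfies α̂(I) ≤ (d + √d)/2. -/
/-!
Vanishing to order `m` at a point of `ℙ²` imposes at most `m(m+1)/2` linear conditions on forms
of degree `t`: in coordinates placing the point at `[1:0:0]` they are the coefficients of the
monomials of degree `< m` in `X₁, X₂`. So for `t = ⌈(m+1)√d⌉` there is a form `F ≠ 0` of degree
`t` vanishing to order `m` at every `qᵢ`. Each star point lies on two of the lines and each `qᵢ`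
on one, so `g = F · (L₁⋯L_d)ᵐ` lies in `P²ᵐ` for the ideal `P` of every point of `Z`. As `I(Z)`
is the intersection of these pairwise incomparable primes, prime avoidance yields `u` outside all
of them, hence outside every associated prime of `I(Z)`, with `u g ∈ I(Z)²ᵐ`. Thus
`g ∈ I(Z)⁽²ᵐ⁾`, and `α̂(I) ≤ (t + m d)/(2m)`, which tends to `(d + √d)/2`.
-/

open MvPolynomial

section SymbolicPower
variable {R : Type*} [CommRing R]

/-- The multiplicative set `U = R \ ⋃ P ∈ Ass(R/I), P`. -/
def assComplement (I : Ideal R) : Submonoid R where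
  carrier := {x | ∀ P ∈ associatedPrimes R (R ⧸ I), x ∉ P}
  one_mem' := fun P hP => (Ideal.ne_top_iff_one P).mp hP.1.ne_top
  mul_mem' := by
    intro a b ha hb P hP hab
    rcases hP.1.mem_or_mem hab with h | h
    · exact ha P hP h
    · exact hb P hP h

/-- The `m`-th symbolic power `I^(m) = R ∩ I^m R_U`. -/
def symbolicPower (I : Ideal R) (m : ℕ) : Ideal R :=
  Ideal.comap (algebraMap R (Localization (assComplement I)))
    (Ideal.map (algebraMap R (Localization (assComplement I))) (I ^ m))

/-- The resurgence `ρ(I) = sup { m/r : I^(m) ⊄ I^r }`. -/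
noncomputable def resurgence (I : Ideal R) : ℝ :=
  sSup {x : ℝ | ∃ m r : ℕ, 0 < m ∧ 0 < r ∧ ¬ symbolicPower I m ≤ I ^ r ∧ x = (m : ℝ) / r}

end SymbolicPower

section Poly
variable {K : Type*} [Field K] {n : ℕ}

attribute [local instance] MvPolynomial.gradedAlgebra

/-- The initial degree `α(I)`: the least degree of a nonzero element of `I`. -/
noncomputable def initDeg (I : Ideal (MvPolynomial (Fin n) K)) : ℕ :=
  sInf {t | ∃ f ∈ I, f ≠ 0 ∧ MvPolynomial.totalDegree f = t}

/-- The Waldschmidt constant `α̂(I) = inf_{m ≥ 1} α(I^(m))/m`. -/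
noncomputable def waldschmidt (I : Ideal (MvPolynomial (Fin n) K)) : ℝ :=
  ⨅ m : ℕ+, (initDeg (symbolicPower I m) : ℝ) / (m : ℝ)

/-- The vanishing (saturated radical) ideal of the projective point with homogeneous
coordinates `p`: all polynomials vanishing on the line spanned by `p`. -/
noncomputable def pointIdeal (p : Fin n → K) : Ideal (MvPolynomial (Fin n) K) :=
  ⨅ t : K, RingHom.ker (MvPolynomial.eval (t • p) : MvPolynomial (Fin n) K →+* K)

/-- An ideal is homogeneous w.r.t. the standard grading. -/
def IsHomogeneousIdeal (I : Ideal (MvPolynomial (Fin n) K)) : Prop :=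
  Ideal.IsHomogeneous (homogeneousSubmodule (Fin n) K) I

/-- Two coordinate vectors represent the same projective point. -/
def ProjEq (u v : Fin n → K) : Prop := ∃ c : K, c ≠ 0 ∧ u = c • v

/-- A homogeneous ideal is saturated (w.r.t. the irrelevant maximal ideal). -/
def IsSaturatedIdeal (J : Ideal (MvPolynomial (Fin n) K)) : Prop :=
  ∀ f, (∀ i, MvPolynomial.X i * f ∈ J) → f ∈ J

/-- The Hilbert function `t ↦ dim_K (R/J)_t` of a homogeneous ideal `J`. -/
noncomputable def hilbFun (J : Ideal (MvPolynomial (Fin n) K)) (t : ℕ) : ℕ :=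
  Module.finrank K ((homogeneousSubmodule (Fin n) K t).map
    (Ideal.Quotient.mkₐ K J).toLinearMap)

/-- `I` is minimally generated by `k` forms of degree `δ`. -/
def MinimallyGeneratedBy (I : Ideal (MvPolynomial (Fin n) K)) (k δ : ℕ) : Prop :=
  ∃ g : Fin k → MvPolynomial (Fin n) K,
    (∀ i, (g i).IsHomogeneous δ ∧ g i ≠ 0) ∧
    Ideal.span (Set.range g) = I ∧
    ∀ i, g i ∉ Ideal.span (g '' {j | j ≠ i})

/-- `IsMinFreeRes I e0 e1 e2 g A B` : the data of a graded minimal free resolution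
`0 → ⊕_k R(-e2 k) -B→ ⊕_j R(-e1 j) -A→ ⊕_i R(-e0 i) → I → 0` of `I`. -/
def IsMinFreeRes (I : Ideal (MvPolynomial (Fin n) K)) {n0 n1 n2 : ℕ}
    (e0 : Fin n0 → ℕ) (e1 : Fin n1 → ℕ) (e2 : Fin n2 → ℕ)
    (g : Fin n0 → MvPolynomial (Fin n) K)
    (A : Matrix (Fin n0) (Fin n1) (MvPolynomial (Fin n) K))
    (B : Matrix (Fin n1) (Fin n2) (MvPolynomial (Fin n) K)) : Prop :=
  (∀ i, (g i).IsHomogeneous (e0 i) ∧ g i ≠ 0) ∧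
  Ideal.span (Set.range g) = I ∧
  (∀ i j, (A i j).IsHomogeneous (e1 j - e0 i) ∧ (e1 j ≤ e0 i → A i j = 0)) ∧
  (∀ j k, (B j k).IsHomogeneous (e2 k - e1 j) ∧ (e2 k ≤ e1 j → B j k = 0)) ∧
  Function.Injective (Matrix.toLin' B) ∧
  LinearMap.range (Matrix.toLin' B) = LinearMap.ker (Matrix.toLin' A) ∧
  LinearMap.range (Matrix.toLin' A) =
    LinearMap.ker (Fintype.linearCombination (MvPolynomial (Fin n) K) g)

/-- The Castelnuovo–Mumford regularity of `I` is `r`: the minimal graded free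
resolution of `I` satisfies `max_j (f_j - j) = r`. -/
def HasReg (I : Ideal (MvPolynomial (Fin n) K)) (r : ℕ) : Prop :=
  ∃ (n0 n1 n2 : ℕ) (e0 : Fin n0 → ℕ) (e1 : Fin n1 → ℕ) (e2 : Fin n2 → ℕ)
    (g : Fin n0 → MvPolynomial (Fin n) K)
    (A : Matrix (Fin n0) (Fin n1) (MvPolynomial (Fin n) K))
    (B : Matrix (Fin n1) (Fin n2) (MvPolynomial (Fin n) K)),
    IsMinFreeRes I e0 e1 e2 g A B ∧
    r = max (Finset.univ.sup e0)
        (max (Finset.univ.sup fun j => e1 j - 1) (Finset.univ.sup fun k => e2 k - 2))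

/-- `I` has the (minimal, linear) free resolution
`0 → R^d(-d-1) → R^{d+1}(-d) → I → 0`. -/
def HasLinearPointsRes (I : Ideal (MvPolynomial (Fin n) K)) (d : ℕ) : Prop :=
  ∃ (g : Fin (d+1) → MvPolynomial (Fin n) K)
    (A : Matrix (Fin (d+1)) (Fin d) (MvPolynomial (Fin n) K)),
    (∀ i, (g i).IsHomogeneous d ∧ g i ≠ 0) ∧
    Ideal.span (Set.range g) = I ∧
    (∀ i j, (A i j).IsHomogeneous 1) ∧
    Function.Injective (Matrix.toLin' A) ∧
    LinearMap.range (Matrix.toLin' A) =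
      LinearMap.ker (Fintype.linearCombination (MvPolynomial (Fin n) K) g)

/-- `I` has a minimal free resolution that is linear, with generators in degree `δ`. -/
def HasLinearResolution (I : Ideal (MvPolynomial (Fin n) K)) (δ : ℕ) : Prop :=
  ∃ (n0 n1 n2 : ℕ) (g : Fin n0 → MvPolynomial (Fin n) K)
    (A : Matrix (Fin n0) (Fin n1) (MvPolynomial (Fin n) K))
    (B : Matrix (Fin n1) (Fin n2) (MvPolynomial (Fin n) K)),
    IsMinFreeRes I (fun _ => δ) (fun _ => δ + 1) (fun _ => δ + 2) g A B

end Poly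

section QSC
variable (K : Type*) [Field K]

/-- A quasi star configuration `Z_d = T_d + S_2(2,d)` in `P^2`:
`d` general lines `L i` (pairwise distinct, no three concurrent), the star
configuration of their pairwise intersection points `p i j`, together with
`d` further distinct points `q i ∈ L i`, disjoint from the star points and
not all collinear. -/
structure QuasiStarConfig (d : ℕ) where
  L : Fin d → MvPolynomial (Fin 3) K
  L_hom : ∀ i, (L i).IsHomogeneous 1
  L_ne : ∀ i, L i ≠ 0
  lines_distinct : ∀ i j, i ≠ j → ¬ ∃ c : K, L i = c • L j
  no_three_concurrent : ∀ i j k : Fin d, i ≠ j → i ≠ k → j ≠ k →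
    ∀ v : Fin 3 → K, v ≠ 0 →
      ¬ (eval v (L i) = 0 ∧ eval v (L j) = 0 ∧ eval v (L k) = 0)
  p : Fin d → Fin d → (Fin 3 → K)
  p_ne : ∀ i j, i ≠ j → p i j ≠ 0
  p_mem : ∀ i j, i ≠ j → eval (p i j) (L i) = 0 ∧ eval (p i j) (L j) = 0
  q : Fin d → (Fin 3 → K)
  q_ne : ∀ i, q i ≠ 0
  q_mem : ∀ i, eval (q i) (L i) = 0
  q_distinct : ∀ i j, i ≠ j → ¬ ProjEq (q i) (q j)
  q_not_star : ∀ i j k, j ≠ k → ¬ ProjEq (q i) (p j k)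
  q_not_collinear : ¬ ∃ M : MvPolynomial (Fin 3) K,
    M.IsHomogeneous 1 ∧ M ≠ 0 ∧ ∀ i, eval (q i) M = 0

end QSC

/-- The defining (radical, saturated) ideal of a quasi star configuration. -/
noncomputable def QuasiStarConfig.ideal {K : Type*} [Field K] {d : ℕ}
    (Z : QuasiStarConfig K d) :
    Ideal (MvPolynomial (Fin 3) K) :=
  (⨅ (i : Fin d) (j : Fin d) (_ : i ≠ j), pointIdeal (Z.p i j)) ⊓
    ⨅ i : Fin d, pointIdeal (Z.q i)

section PointIdeal
variable {K : Type*} [Field K] {n : ℕ}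

lemma mem_pointIdeal_iff {z : Fin n → K} {f : MvPolynomial (Fin n) K} :
    f ∈ pointIdeal z ↔ ∀ t : K, eval (t • z) f = 0 := by
  simp only [pointIdeal, Submodule.mem_iInf, RingHom.mem_ker]

lemma pointIdeal_smul {z : Fin n → K} {c : K} (hc : c ≠ 0) :
    pointIdeal (c • z) = pointIdeal z := by
  ext f
  simp only [mem_pointIdeal_iff, smul_smul]
  refine ⟨fun h t => ?_, fun h t => h (t * c)⟩
  simpa [div_mul_cancel₀ t hc] using h (t / c)

lemma MvPolynomial.IsHomogeneous.eval_smul {σ : Type*} [Fintype σ] {f : MvPolynomial σ K}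
    {k : ℕ} (hf : f.IsHomogeneous k) (t : K) (v : σ → K) :
    eval (t • v) f = t ^ k * eval v f := by
  rw [eval_eq', eval_eq', Finset.mul_sum]
  refine Finset.sum_congr rfl fun μ hμ => ?_
  have hdeg : ∑ i, μ i = k := by
    rw [← Finsupp.degree_eq_sum, Finsupp.degree_eq_weight_one]
    exact hf (mem_support_iff.mp hμ)
  simp only [Pi.smul_apply, smul_eq_mul, mul_pow, Finset.prod_mul_distrib,
    Finset.prod_pow_eq_pow_sum, hdeg]
  ring

lemma MvPolynomial.IsHomogeneous.mem_pointIdeal {f : MvPolynomial (Fin n) K} {k : ℕ}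
    {z : Fin n → K} (hf : f.IsHomogeneous k) (h : eval z f = 0) : f ∈ pointIdeal z :=
  mem_pointIdeal_iff.mpr fun t => by rw [hf.eval_smul, h, mul_zero]

noncomputable def restrictLine (z : Fin n → K) : MvPolynomial (Fin n) K →+* Polynomial K :=
  eval₂Hom Polynomial.C fun i => Polynomial.C (z i) * Polynomial.X

lemma eval_restrictLine (z : Fin n → K) (t : K) (f : MvPolynomial (Fin n) K) :
    (restrictLine z f).eval t = eval (t • z) f := by
  induction f using MvPolynomial.induction_on with
  | C a => simp [restrictLine]
  | add f g hf hg => simp only [map_add, Polynomial.eval_add, hf, hg]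
  | mul_X f i hf =>
    rw [map_mul, Polynomial.eval_mul, hf, map_mul]
    simp only [restrictLine, coe_eval₂Hom, eval₂_X, Polynomial.eval_mul, Polynomial.eval_C,
      Polynomial.eval_X, eval_X, Pi.smul_apply, smul_eq_mul]
    ring

lemma pointIdeal_eq_ker_restrictLine [Infinite K] (z : Fin n → K) :
    pointIdeal z = RingHom.ker (restrictLine z) := by
  ext f
  rw [mem_pointIdeal_iff, RingHom.mem_ker]
  refine ⟨fun h => Polynomial.funext fun t => ?_, fun h t => ?_⟩
  · rw [eval_restrictLine, h, Polynomial.eval_zero]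
  · rw [← eval_restrictLine, h, Polynomial.eval_zero]

instance pointIdeal_isPrime [Infinite K] (z : Fin n → K) : (pointIdeal z).IsPrime := by
  rw [pointIdeal_eq_ker_restrictLine]
  exact RingHom.ker_isPrime _

noncomputable def linearForm (f : Module.Dual K (Fin n → K)) :
    MvPolynomial (Fin n) K :=
  ∑ i, C (f (Pi.single i 1)) * X i

lemma eval_linearForm (f : Module.Dual K (Fin n → K)) (v : Fin n → K) :
    eval v (linearForm f) = f v := by
  rw [LinearMap.pi_apply_eq_sum_univ f v, linearForm]
  simp only [map_sum, map_mul, eval_C, eval_X, mul_comm]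
  refine Finset.sum_congr rfl fun i _ => ?_
  congr
  ext j
  simp [Pi.single_apply, eq_comm]

lemma isHomogeneous_linearForm (f : Module.Dual K (Fin n → K)) :
    (linearForm f).IsHomogeneous 1 :=
  IsHomogeneous.sum _ _ _ fun i _ => isHomogeneous_C_mul_X _ i

lemma exists_mem_pointIdeal_eval_ne_zero {x z : Fin n → K} (hz : z ∉ K ∙ x) :
    ∃ ℓ ∈ pointIdeal x, eval z ℓ ≠ 0 := by
  obtain ⟨f, hfz, hfx⟩ := Submodule.exists_dual_map_eq_bot_of_notMem hz inferInstance
  have hx : f x = 0 := by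
    simpa [hfx] using Submodule.mem_map_of_mem (f := f) (Submodule.mem_span_singleton_self x)
  refine ⟨linearForm f, (isHomogeneous_linearForm f).mem_pointIdeal ?_, ?_⟩ <;>
    rwa [eval_linearForm]

lemma pointIdeal_eq_of_le {x z : Fin n → K} (hz : z ≠ 0) (h : pointIdeal x ≤ pointIdeal z) :
    pointIdeal x = pointIdeal z := by
  by_contra hne
  have hzx : z ∈ K ∙ x := by
    by_contra hzx
    obtain ⟨ℓ, hℓx, hℓz⟩ := exists_mem_pointIdeal_eval_ne_zero hzx
    exact hℓz (by simpa using mem_pointIdeal_iff.mp (h hℓx) 1)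
  obtain ⟨c, rfl⟩ := Submodule.mem_span_singleton.mp hzx
  have hc : c ≠ 0 := by rintro rfl; exact hz (zero_smul _ _)
  exact hne (pointIdeal_smul hc).symm

end PointIdeal

section LinearSubstitution
variable {K : Type*} [Field K] {n : ℕ}

noncomputable def linSubst (A : (Fin n → K) →ₗ[K] Fin n → K) :
    MvPolynomial (Fin n) K →ₐ[K] MvPolynomial (Fin n) K :=
  aeval fun i => linearForm (LinearMap.proj i ∘ₗ A)

lemma eval_linSubst (A : (Fin n → K) →ₗ[K] Fin n → K) (v : Fin n → K)
    (f : MvPolynomial (Fin n) K) : eval v (linSubst A f) = eval (A v) f := by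
  induction f using MvPolynomial.induction_on with
  | C a => simp [linSubst]
  | add f g hf hg => simp only [map_add, hf, hg]
  | mul_X f i hf =>
    rw [map_mul, map_mul, hf, linSubst, aeval_X, eval_linearForm]
    simp

lemma MvPolynomial.IsHomogeneous.linSubst {f : MvPolynomial (Fin n) K} {k : ℕ}
    (hf : f.IsHomogeneous k) (A : (Fin n → K) →ₗ[K] Fin n → K) :
    (linSubst A f).IsHomogeneous k := by
  rw [← one_mul k]
  exact hf.aeval _ fun i => isHomogeneous_linearForm _

lemma linSubst_symm_linSubst [Infinite K] (e : (Fin n → K) ≃ₗ[K] Fin n → K)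
    (f : MvPolynomial (Fin n) K) : linSubst e.symm (linSubst e f) = f :=
  MvPolynomial.funext fun v => by
    rw [eval_linSubst, eval_linSubst, LinearEquiv.coe_coe, LinearEquiv.coe_coe,
      LinearEquiv.apply_symm_apply]

lemma exists_linearEquiv_apply_eq {V : Type*} [AddCommGroup V] [Module K V] {u v : V}
    (hu : u ≠ 0) (hv : v ≠ 0) : ∃ e : V ≃ₗ[K] V, e u = v := by
  obtain ⟨e, he⟩ := Submodule.exists_linearEquiv_restrict_eq
    ((LinearEquiv.toSpanNonzeroSingleton K V u hu).symm ≪≫ₗ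
      LinearEquiv.toSpanNonzeroSingleton K V v hv)
  refine ⟨e, ?_⟩
  have key := he (LinearEquiv.toSpanNonzeroSingleton K V u hu 1)
  rw [LinearEquiv.trans_apply, LinearEquiv.symm_apply_apply,
    LinearEquiv.toSpanNonzeroSingleton_one, LinearEquiv.toSpanNonzeroSingleton_one] at key
  exact key.symm

lemma map_linSubst_span_X_pow_le {z : Fin (n + 1) → K}
    {e : (Fin (n + 1) → K) ≃ₗ[K] Fin (n + 1) → K} (he : e (Pi.single 0 1) = z) (m : ℕ) :
    (Ideal.span (X '' ↑(Finset.univ.erase (0 : Fin (n + 1)))) ^ m).map (linSubst e.symm) ≤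
      pointIdeal z ^ m := by
  rw [Ideal.map_pow]
  refine Ideal.pow_right_mono ?_ m
  rw [Ideal.map_span, Ideal.span_le]
  rintro _ ⟨_, ⟨j, hj, rfl⟩, rfl⟩
  refine ((isHomogeneous_X K j).linSubst _).mem_pointIdeal ?_
  rw [eval_linSubst, eval_X, ← he, LinearEquiv.coe_coe, LinearEquiv.symm_apply_apply]
  exact Pi.single_eq_of_ne (Finset.ne_of_mem_erase hj) _

end LinearSubstitution

section Monomials
variable {R σ : Type*} [CommSemiring R]

lemma prod_X_pow_dvd_monomial (s : Finset σ) (μ : σ →₀ ℕ) (c : R) :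
    ∏ i ∈ s, X i ^ μ i ∣ monomial μ c := by
  classical
  rw [monomial_eq, Finsupp.prod,
    ← Finset.prod_filter_of_ne (p := (· ∈ μ.support)) fun i _ h => ?_]
  · refine Dvd.dvd.mul_left (Finset.prod_dvd_prod_of_subset _ _ _ fun i hi => ?_) _
    simpa using (Finset.mem_filter.mp hi).2
  · by_contra h0
    exact h (by simp [Finsupp.notMem_support_iff.mp h0])

lemma mem_span_X_pow_of_le_sum (s : Finset σ) {m : ℕ} {G : MvPolynomial σ R}
    (h : ∀ μ ∈ G.support, m ≤ ∑ i ∈ s, μ i) : G ∈ Ideal.span (X '' s) ^ m := by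
  rw [G.as_sum]
  refine Ideal.sum_mem _ fun μ hμ => Ideal.pow_le_pow_right (h μ hμ) ?_
  refine Ideal.mem_of_dvd _ (prod_X_pow_dvd_monomial s μ _) ?_
  rw [← Finset.prod_pow_eq_pow_sum]
  exact Ideal.prod_mem_prod fun i hi =>
    Ideal.pow_mem_pow (Ideal.subset_span (Set.mem_image_of_mem X hi)) _

end Monomials

section Counting
open Finset

lemma exists_isHomogeneous_coeff_eq_zero {K σ ι : Type*} [Field K] [Fintype σ] [DecidableEq σ]
    [Fintype ι] (Ψ : ι → MvPolynomial σ K →ₗ[K] MvPolynomial σ K) (E : Finset (σ →₀ ℕ))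
    {t : ℕ} (hcard : Fintype.card ι * #E < #((univ : Finset σ).finsuppAntidiag t)) :
    ∃ F : MvPolynomial σ K,
      F ≠ 0 ∧ F.IsHomogeneous t ∧ ∀ i, ∀ μ ∈ E, coeff μ (Ψ i F) = 0 := by
  set D := (univ : Finset σ).finsuppAntidiag t
  let Φ : (D → K) →ₗ[K] MvPolynomial σ K :=
    Fintype.linearCombination K fun μ : D => monomial (μ : σ →₀ ℕ) 1
  let Θ : (D → K) →ₗ[K] (ι × E → K) :=
    LinearMap.pi fun p => lcoeff K p.2.1 ∘ₗ Ψ p.1 ∘ₗ Φ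
  have hcoeff (c : D → K) (μ : D) : coeff μ (Φ c) = c μ := by
    simp only [Φ, Fintype.linearCombination_apply, coeff_sum, coeff_smul, coeff_monomial,
      Subtype.coe_inj, smul_eq_mul, mul_ite, mul_one, mul_zero, sum_ite_eq', mem_univ, if_true]
  obtain ⟨c, hc, hc0⟩ := Submodule.exists_mem_ne_zero_of_ne_bot <|
    LinearMap.ker_ne_bot_of_finrank_lt (f := Θ) (by simpa [Module.finrank_fintype_fun_eq_card])
  refine ⟨Φ c, fun h => hc0 (funext fun μ => by simpa [h] using (hcoeff c μ).symm), ?_, ?_⟩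
  · refine IsHomogeneous.sum _ _ _ fun μ _ => ?_
    rw [smul_monomial]
    refine isHomogeneous_monomial _ ?_
    rw [Finsupp.degree_eq_sum]
    exact (mem_finsuppAntidiag.mp μ.2).1
  · intro i μ hμ
    simpa [Θ] using congrFun (LinearMap.mem_ker.mp hc) (i, ⟨μ, hμ⟩)

lemma two_mul_card_sigma_antidiagonal (n : ℕ) :
    2 * #((range n).sigma fun a => HasAntidiagonal.antidiagonal a) = n * (n + 1) := by
  rw [card_sigma]
  simp only [Finset.Nat.card_antidiagonal]
  induction n with
  | zero => simp
  | succ n ih => rw [sum_range_succ, mul_add, ih]; ring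

lemma two_mul_card_finsuppAntidiag_fin_three (t : ℕ) :
    2 * #((univ : Finset (Fin 3)).finsuppAntidiag t) = (t + 1) * (t + 2) := by
  rw [card_finsuppAntidiag_nat_eq_choose, card_univ, Fintype.card_fin,
    show 3 + t - 1 = t + 2 by omega, Nat.choose_symm_add, Nat.choose_two_right,
    Nat.mul_div_cancel' (even_iff_two_dvd.mp (Nat.even_mul_pred_self _)),
    show t + 2 - 1 = t + 1 by omega, mul_comm]

lemma two_mul_card_filter_finsuppAntidiag_le (t m : ℕ) :
    2 * #(((univ : Finset (Fin 3)).finsuppAntidiag t).filter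
      fun μ => ∑ i ∈ univ.erase 0, μ i < m) ≤ m * (m + 1) := by
  have hsum (μ : Fin 3 →₀ ℕ) : ∑ i ∈ univ.erase 0, μ i = μ 1 + μ 2 := by
    rw [show (univ : Finset (Fin 3)).erase 0 = {1, 2} by decide, sum_pair (by decide)]
  rw [← two_mul_card_sigma_antidiagonal]
  refine Nat.mul_le_mul_left 2 <|
    card_le_card_of_injOn (fun μ => ⟨μ 1 + μ 2, (μ 1, μ 2)⟩) ?_ ?_
  · intro μ hμ
    simp only [coe_filter, Set.mem_ofPred_eq, hsum] at hμ
    simp [hμ.2]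
  · intro μ hμ ν hν h
    simp only [coe_filter, Set.mem_ofPred_eq, mem_finsuppAntidiag, Fin.sum_univ_three] at hμ hν
    simp only [Sigma.mk.injEq, Prod.mk.injEq, heq_eq_eq] at h
    ext j
    fin_cases j <;> simp <;> omega

lemma exists_isHomogeneous_mem_pointIdeal_pow {K : Type*} [Field K] [Infinite K] {d : ℕ}
    {q : Fin d → Fin 3 → K} (hq : ∀ i, q i ≠ 0) {m t : ℕ}
    (hdim : d * (m * (m + 1)) < (t + 1) * (t + 2)) :
    ∃ F : MvPolynomial (Fin 3) K,
      F ≠ 0 ∧ F.IsHomogeneous t ∧ ∀ i, F ∈ pointIdeal (q i) ^ m := by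
  choose e he using fun i => exists_linearEquiv_apply_eq (K := K)
    (Pi.single_ne_zero_iff.mpr one_ne_zero : (Pi.single 0 1 : Fin 3 → K) ≠ 0) (hq i)
  set E := ((univ : Finset (Fin 3)).finsuppAntidiag t).filter
    fun μ => ∑ i ∈ univ.erase 0, μ i < m
  obtain ⟨F, hF0, hFt, hFE⟩ := exists_isHomogeneous_coeff_eq_zero
    (fun i => (linSubst (e i : (Fin 3 → K) →ₗ[K] Fin 3 → K)).toLinearMap) E (t := t) (by
      have hE : 2 * #E ≤ m * (m + 1) := two_mul_card_filter_finsuppAntidiag_le t m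
      have hD := two_mul_card_finsuppAntidiag_fin_three t
      rw [Fintype.card_fin]
      nlinarith [Nat.mul_le_mul_left d hE])
  refine ⟨F, hF0, hFt, fun i => ?_⟩
  rw [← linSubst_symm_linSubst (e i) F]
  refine map_linSubst_span_X_pow_le (he i) m (Ideal.mem_map_of_mem _ ?_)
  refine mem_span_X_pow_of_le_sum _ fun μ hμ => not_lt.mp fun hlt => mem_support_iff.mp hμ ?_
  refine hFE i μ (mem_filter.mpr ⟨?_, hlt⟩)
  rw [mem_finsuppAntidiag, ← Finsupp.degree_eq_sum, Finsupp.degree_eq_weight_one]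
  exact ⟨(hFt.linSubst _) (mem_support_iff.mp hμ), subset_univ _⟩

end Counting

section SymbolicPowerOfIntersection
variable {R : Type*} [CommRing R]

lemma mem_symbolicPower_of_mul_mem {I : Ideal R} {k : ℕ} {u g : R} (hu : u ∈ assComplement I)
    (h : u * g ∈ I ^ k) : g ∈ symbolicPower I k := by
  obtain ⟨v, hv⟩ :=
    IsLocalization.map_units (Localization (assComplement I)) (⟨u, hu⟩ : assComplement I)
  rw [symbolicPower, Ideal.mem_comap, ← one_mul (algebraMap _ _ g), ← v.inv_mul, mul_assoc, hv,
    ← map_mul]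
  exact Ideal.mul_mem_left _ _ (Ideal.mem_map_of_mem _ h)

lemma exists_le_of_mem_associatedPrimes_iInf {ι : Type*} {P : ι → Ideal R}
    (hP : ∀ i, (P i).IsPrime) {Q : Ideal R}
    (hQ : Q ∈ associatedPrimes R (R ⧸ ⨅ i, P i)) : ∃ i, Q ≤ P i := by
  obtain ⟨hQprime, x, rfl⟩ := hQ
  obtain ⟨r, rfl⟩ := Ideal.Quotient.mk_surjective x
  have hr : r ∉ ⨅ i, P i := by
    intro hr
    rw [Ideal.Quotient.eq_zero_iff_mem.mpr hr, Submodule.colon_singleton_zero,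
      Ideal.radical_top] at hQprime
    exact hQprime.ne_top rfl
  obtain ⟨i, hi⟩ : ∃ i, r ∉ P i := by simpa [Submodule.mem_iInf] using hr
  refine ⟨i, fun y ⟨k, hk⟩ => (hP i).mem_of_pow_mem k ?_⟩
  have hyr : y ^ k * r ∈ ⨅ i, P i := by
    rw [← Ideal.Quotient.eq_zero_iff_mem, map_mul, map_pow]
    simpa [Submodule.mem_colon_singleton, Algebra.smul_def] using hk
  exact ((hP i).mem_or_mem (Submodule.mem_iInf _ |>.mp hyr i)).resolve_right hi

lemma exists_notMem_mul_mem_iInf {ι : Type*} [Finite ι] {P : ι → Ideal R}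
    (hP : ∀ i, (P i).IsPrime) (hanti : ∀ i j, P i ≤ P j → P i = P j) (i : ι) :
    ∃ w ∉ P i, ∀ f ∈ P i, w * f ∈ ⨅ j, P j := by
  classical
  have := Fintype.ofFinite ι
  set s := Finset.univ.filter fun j => P j ≠ P i
  obtain ⟨w, hws, hwi⟩ : ∃ w ∈ s.inf P, w ∉ P i := by
    refine SetLike.not_le_iff_exists.mp fun hle => ?_
    obtain ⟨j, hj, hji⟩ := (hP i).inf_le'.mp hle
    exact (Finset.mem_filter.mp hj).2 (hanti j i hji)
  refine ⟨w, hwi, fun f hf => Submodule.mem_iInf _ |>.mpr fun j => ?_⟩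
  by_cases hj : P j = P i
  · exact Ideal.mul_mem_left _ _ (hj ▸ hf)
  · exact Ideal.mul_mem_right _ _ (Finset.inf_le (f := P) (by simpa [s] using hj) hws)

lemma pow_mul_mem_pow_of_forall_mul_mem {I P : Ideal R} {w a : R} (hw : ∀ f ∈ P, w * f ∈ I)
    {k : ℕ} (ha : a ∈ P ^ k) : w ^ k * a ∈ I ^ k := by
  have hle : Ideal.span {w} * P ≤ I := Ideal.mul_le.mpr fun r hr f hf => by
    obtain ⟨c, rfl⟩ := Ideal.mem_span_singleton'.mp hr
    simpa [mul_assoc] using Ideal.mul_mem_left _ c (hw f hf)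
  refine Ideal.pow_right_mono hle k ?_
  rw [mul_pow, Ideal.span_singleton_pow]
  exact Ideal.mul_mem_mul (Ideal.mem_span_singleton_self _) ha

theorem iInf_pow_le_symbolicPower_iInf {ι : Type*} [Finite ι] {P : ι → Ideal R}
    (hP : ∀ i, (P i).IsPrime) (hanti : ∀ i j, P i ≤ P j → P i = P j) (k : ℕ) :
    ⨅ i, P i ^ k ≤ symbolicPower (⨅ i, P i) k := by
  intro g hg
  set J := ((⨅ i, P i) ^ k).colon (Ideal.span {g})
  have hJ : ∀ i, ¬ J ≤ P i := fun i hle => by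
    obtain ⟨w, hwi, hw⟩ := exists_notMem_mul_mem_iInf hP hanti i
    have hwg := pow_mul_mem_pow_of_forall_mul_mem hw (Submodule.mem_iInf _ |>.mp hg i)
    exact hwi <| (hP i).mem_of_pow_mem k <| hle <| Ideal.mem_colon_span_singleton.mpr hwg
  obtain ⟨u, huJ, hu⟩ : ∃ u ∈ J, u ∉ ⋃ Q ∈ Set.range P, id Q := by
    refine Set.not_subset.mp fun hsub => ?_
    obtain ⟨_, ⟨i, rfl⟩, hle⟩ := (Ideal.subset_union_prime_finite (f := id)
      (Set.finite_range P) ⊥ ⊥ (by rintro _ ⟨i, rfl⟩ - -; exact hP i)).mp hsub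
    exact hJ i hle
  refine mem_symbolicPower_of_mul_mem (u := u) (fun Q hQ huQ => ?_)
    (Ideal.mem_colon_span_singleton.mp huJ)
  obtain ⟨i, hi⟩ := exists_le_of_mem_associatedPrimes_iInf hP hQ
  exact hu (Set.mem_biUnion ⟨i, rfl⟩ (hi huQ))

end SymbolicPowerOfIntersection

section Waldschmidt
variable {K : Type*} [Field K] {n : ℕ}

lemma initDeg_le_totalDegree {I : Ideal (MvPolynomial (Fin n) K)} {f : MvPolynomial (Fin n) K}
    (hf : f ∈ I) (hf0 : f ≠ 0) : initDeg I ≤ f.totalDegree :=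
  Nat.sInf_le ⟨f, hf, hf0, rfl⟩

lemma waldschmidt_le_div (I : Ideal (MvPolynomial (Fin n) K)) {k : ℕ} (hk : 0 < k) :
    waldschmidt I ≤ initDeg (symbolicPower I k) / (k : ℝ) :=
  ciInf_le (f := fun k : ℕ+ => (initDeg (symbolicPower I k) : ℝ) / k)
    ⟨0, by rintro _ ⟨k, rfl⟩; positivity⟩ ⟨k, hk⟩

end Waldschmidt

namespace QuasiStarConfig
variable {K : Type*} [Field K] {d : ℕ} (Z : QuasiStarConfig K d)

def point : {ij : Fin d × Fin d // ij.1 ≠ ij.2} ⊕ Fin d → Fin 3 → K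
  | .inl ij => Z.p ij.1.1 ij.1.2
  | .inr i => Z.q i

lemma point_ne_zero : ∀ k, Z.point k ≠ 0
  | .inl ij => Z.p_ne _ _ ij.2
  | .inr i => Z.q_ne i

lemma ideal_eq_iInf : Z.ideal = ⨅ k, pointIdeal (Z.point k) := by
  simp only [QuasiStarConfig.ideal, iInf_sum, point, iInf_subtype, iInf_prod]

lemma mul_prod_L_pow_mem_pointIdeal_pow {F : MvPolynomial (Fin 3) K} {m : ℕ}
    (hF : ∀ i, F ∈ pointIdeal (Z.q i) ^ m) (k) :
    F * (∏ i, Z.L i) ^ m ∈ pointIdeal (Z.point k) ^ (2 * m) := by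
  have hL {i z} (h : eval z (Z.L i) = 0) : Z.L i ∈ pointIdeal z := (Z.L_hom i).mem_pointIdeal h
  rcases k with ⟨⟨i, j⟩, hij⟩ | i
  · have hdvd : Z.L i * Z.L j ∣ ∏ i, Z.L i := by
      simpa [Finset.prod_pair hij] using Finset.prod_dvd_prod_of_subset {i, j} Finset.univ Z.L
        (Finset.subset_univ _)
    refine Ideal.mul_mem_left _ _ (Ideal.mem_of_dvd _ (pow_dvd_pow_of_dvd hdvd m) ?_)
    rw [pow_mul, pow_two]
    exact Ideal.pow_mem_pow (Ideal.mul_mem_mul (hL (Z.p_mem i j hij).1) (hL (Z.p_mem i j hij).2)) m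
  · rw [two_mul, pow_add]
    exact Ideal.mul_mem_mul (hF i) (Ideal.mem_of_dvd _
      (pow_dvd_pow_of_dvd (Finset.dvd_prod_of_mem _ (Finset.mem_univ i)) m)
      (Ideal.pow_mem_pow (hL (Z.q_mem i)) m))

lemma mul_prod_L_pow_mem_symbolicPower [Infinite K] {F : MvPolynomial (Fin 3) K} {m : ℕ}
    (hF : ∀ i, F ∈ pointIdeal (Z.q i) ^ m) :
    F * (∏ i, Z.L i) ^ m ∈ symbolicPower Z.ideal (2 * m) := by
  rw [ideal_eq_iInf]
  exact iInf_pow_le_symbolicPower_iInf (fun k => inferInstance)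
    (fun k l => pointIdeal_eq_of_le (Z.point_ne_zero l)) _
    (Submodule.mem_iInf _ |>.mpr (Z.mul_prod_L_pow_mem_pointIdeal_pow hF))

lemma initDeg_symbolicPower_le [Infinite K] {m t : ℕ}
    (hdim : d * (m * (m + 1)) < (t + 1) * (t + 2)) :
    initDeg (symbolicPower Z.ideal (2 * m)) ≤ t + m * d := by
  obtain ⟨F, hF0, hFt, hF⟩ := exists_isHomogeneous_mem_pointIdeal_pow Z.q_ne hdim
  have hL : ((∏ i, Z.L i) ^ m).IsHomogeneous (d * m) := by
    simpa using (IsHomogeneous.prod Finset.univ _ _ fun i _ => Z.L_hom i).pow m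
  have hprod0 : (∏ i, Z.L i) ^ m ≠ 0 :=
    pow_ne_zero _ (Finset.prod_ne_zero_iff.mpr fun i _ => Z.L_ne i)
  calc initDeg (symbolicPower Z.ideal (2 * m))
      ≤ (F * (∏ i, Z.L i) ^ m).totalDegree :=
        initDeg_le_totalDegree (Z.mul_prod_L_pow_mem_symbolicPower hF) (mul_ne_zero hF0 hprod0)
    _ = t + m * d := by
        rw [(hFt.mul hL).totalDegree (mul_ne_zero hF0 hprod0), mul_comm d]

lemma waldschmidt_ideal_le [Infinite K] {m : ℕ} (hm : 0 < m) :
    waldschmidt Z.ideal ≤ ((d : ℝ) + √d) / 2 + (√d + 1) / 2 / m := by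
  set t := ⌈(m + 1) * √d⌉₊
  have ht : (m + 1) * √d ≤ t := Nat.le_ceil _
  have hdim : d * (m * (m + 1)) < (t + 1) * (t + 2) := by
    have hsq : ((m + 1) * √d) ^ 2 = (m + 1) ^ 2 * d := by
      rw [mul_pow, Real.sq_sqrt (Nat.cast_nonneg d)]
    have ht2 : ((m + 1) * √d) ^ 2 ≤ (t : ℝ) ^ 2 := pow_le_pow_left₀ (by positivity) ht 2
    exact_mod_cast (by nlinarith : (d : ℝ) * (m * (m + 1)) < (t + 1) * (t + 2))
  have hinit : (initDeg (symbolicPower Z.ideal (2 * m)) : ℝ) ≤ (m + 1) * √d + 1 + m * d := by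
    have hceil := Nat.ceil_lt_add_one (by positivity : (0 : ℝ) ≤ (m + 1) * √d)
    have hdeg : (initDeg (symbolicPower Z.ideal (2 * m)) : ℝ) ≤ t + m * d := by
      exact_mod_cast Z.initDeg_symbolicPower_le hdim
    linarith
  have hm' : (0 : ℝ) < m := Nat.cast_pos.mpr hm
  calc waldschmidt Z.ideal ≤ initDeg (symbolicPower Z.ideal (2 * m)) / (2 * m : ℝ) := by
        exact_mod_cast waldschmidt_le_div Z.ideal (by omega : 0 < 2 * m)
    _ ≤ ((m + 1) * √d + 1 + m * d) / (2 * m) := by gcongr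
    _ = ((d : ℝ) + √d) / 2 + (√d + 1) / 2 / m := by field_simp; ring

end QuasiStarConfig

theorem waldschmidt_quasi_star_le_general {K : Type*} [Field K] [IsAlgClosed K]
    {d : ℕ} (Z : QuasiStarConfig K d)
    (I : Ideal (MvPolynomial (Fin 3) K)) (hI : I = Z.ideal) :
    waldschmidt I ≤ ((d : ℝ) + Real.sqrt d) / 2 := by
  subst hI
  refine ge_of_tendsto ?_ <| Filter.eventually_atTop.mpr ⟨1, fun m hm => Z.waldschmidt_ideal_le hm⟩
  simpa using tendsto_const_nhds.add (tendsto_const_div_atTop_nhds_zero_nat ((√d + 1) / 2))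

/-- for `d ≥ 10`, the Waldschmidt constant of the ideal of a quasi star
configuration `Z_d` satisfies `α̂(I) ≤ (d + √d)/2`. -/
theorem waldschmidt_quasi_star_le {K : Type*} [Field K] [IsAlgClosed K]
    {d : ℕ} (hd : 10 ≤ d) (Z : QuasiStarConfig K d)
    (I : Ideal (MvPolynomial (Fin 3) K)) (hI : I = Z.ideal) :
    waldschmidt I ≤ ((d : ℝ) + Real.sqrt d) / 2 :=
  waldschmidt_quasi_star_le_general Z I hI
end

section
/- There is no real number c < 2 such that for every radical ideal I of points in K[P^2] and all positive integers m, r with m/r ≥ c, the containment I^(m) ⊆ I^r holds. -/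
open MvPolynomial

section Poly
variable {K : Type*} [Field K] {n : ℕ}

attribute [local instance] MvPolynomial.gradedAlgebra

end Poly

/-!
Let `ℓ₀, …, ℓ_d` be tangent lines to a conic and `I` the ideal of their pairwise intersection
points. The product `F = ℓ₀ ⋯ ℓ_d` lies in the square of every point ideal, and these primes
become pairwise comaximal once `X 2` is inverted, so `F ^ k ∈ I^(2k)`. A form of degree `e < d`
in `I` has `d > e` zeros on each `ℓ_i`, so it vanishes on every `ℓ_i`, hence at the `d + 1`
points where they meet `X 2 = 0`, hence on that line and at `(1 : 0 : 0)`. So `t ↦ f (t, 0, 0)`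
is divisible by `t ^ d` for `f ∈ I` and by `t ^ (d * r)` for `f ∈ I ^ r`, whereas for `F ^ k` it
is `t ^ ((d + 1) * k)`. As `c < 2`, one can choose `c ≤ 2k / r` with `(d + 1) * k < d * r`.
-/

namespace MvPolynomial

variable {σ τ : Type*}

section CommSemiring

variable {R : Type*} [CommSemiring R]

theorem IsHomogeneous.eval_smul_s18 {f : MvPolynomial σ R} {n : ℕ} (hf : f.IsHomogeneous n)
    (c : R) (x : σ → R) : eval (c • x) f = c ^ n * eval x f := by
  conv_lhs => rw [f.as_sum]
  conv_rhs => rw [f.as_sum]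
  simp only [map_sum, eval_monomial, Finset.mul_sum]
  refine Finset.sum_congr rfl fun d hd => ?_
  have hdeg : d.sum (fun _ k => k) = n := by
    simpa [Finsupp.weight_apply] using hf (mem_support_iff.mp hd)
  simp only [Pi.smul_apply, smul_eq_mul, mul_pow, Finsupp.prod_mul, ← hdeg]
  rw [Finsupp.prod, Finsupp.sum, Finset.prod_pow_eq_pow_sum]
  ring

theorem eval_aeval (g : σ → MvPolynomial τ R) (x : τ → R) (f : MvPolynomial σ R) :
    eval x (aeval g f) = eval (fun i => eval x (g i)) f := by
  rw [aeval_eq_bind₁]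
  exact eval₂Hom_bind₁ _ _ _ _

noncomputable def rayEval (p : σ → R) : MvPolynomial σ R →ₐ[R] Polynomial R :=
  aeval fun i => Polynomial.C (p i) * Polynomial.X

theorem eval_rayEval (p : σ → R) (f : MvPolynomial σ R) (t : R) :
    (rayEval p f).eval t = eval (t • p) f := by
  have : (Polynomial.evalRingHom t).comp (rayEval p : MvPolynomial σ R →+* Polynomial R) =
      eval (t • p) :=
    ringHom_ext (by simp [rayEval]) fun i => by simp [rayEval]; ring
  exact RingHom.congr_fun this f

end CommSemiring

section Domain

variable {R : Type*} [CommRing R] [IsDomain R] [Infinite R]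

theorem IsHomogeneous.rayEval_eq {f : MvPolynomial σ R} {n : ℕ}
    (hf : f.IsHomogeneous n) (p : σ → R) :
    rayEval p f = Polynomial.C (eval p f) * Polynomial.X ^ n :=
  Polynomial.funext fun t => by simp [eval_rayEval, hf.eval_smul_s18]; ring

theorem coeff_rayEval (p : σ → R) (f : MvPolynomial σ R) (e : ℕ) :
    (rayEval p f).coeff e = eval p (homogeneousComponent e f) := by
  conv_lhs => rw [← sum_homogeneousComponent f]
  simp only [map_sum, Polynomial.finsetSum_coeff,
    (homogeneousComponent_isHomogeneous _ f).rayEval_eq, Polynomial.coeff_C_mul_X_pow]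
  rw [Finset.sum_ite_eq]
  split_ifs with he
  · rfl
  · rw [homogeneousComponent_eq_zero _ _ (by simpa using he), map_zero]

end Domain

variable {K : Type*} [Field K]

theorem IsHomogeneous.eq_zero_of_lt_card_of_eval_eq_zero [Infinite K]
    {H : MvPolynomial (Fin 2) K} {n : ℕ} (hH : H.IsHomogeneous n) {s : Finset K} (hs : n < s.card)
    (h : ∀ b ∈ s, eval ![b, 1] H = 0) : H = 0 := by
  set p := Polynomial.map (eval fun _ => (1 : K)) (finSuccEquiv K 1 H)
  have hp : ∀ b, p.eval b = eval ![b, 1] H := fun b => by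
    have hcons : (Fin.cons b fun _ => 1 : Fin 2 → K) = ![b, 1] := by
      funext i
      fin_cases i <;> rfl
    rw [← eval_eq_eval_mv_eval', hcons]
  have hp0 : p = 0 := by
    refine Polynomial.eq_zero_of_natDegree_lt_card_of_eval_eq_zero' p s
      (fun b hb => (hp b).trans (h b hb)) ?_
    calc p.natDegree ≤ (finSuccEquiv K 1 H).natDegree := Polynomial.natDegree_map_le
      _ = H.degreeOf 0 := natDegree_finSuccEquiv H
      _ ≤ H.totalDegree := degreeOf_le_totalDegree H 0
      _ ≤ n := hH.totalDegree_le
      _ < s.card := hs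
  -- `H` vanishes off the line `x 1 = 0` by homogeneity, hence `X 1 * H` vanishes everywhere.
  have hX : X 1 * H = 0 := by
    refine MvPolynomial.funext fun x => ?_
    rw [map_mul, map_zero, eval_X]
    by_cases hx : x 1 = 0
    · rw [hx, zero_mul]
    · have hx' : x = x 1 • ![x 0 / x 1, 1] := by
        ext i
        fin_cases i <;> simp [mul_div_cancel₀ _ hx]
      rw [hx', hH.eval_smul_s18, ← hp, hp0]
      simp
  exact (mul_eq_zero.mp hX).resolve_left (X_ne_zero 1)

theorem IsHomogeneous.eval_eq_zero_of_eval_smul_add_eq_zero [Infinite K]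
    {f : MvPolynomial σ K} {n : ℕ} (hf : f.IsHomogeneous n) (P R : σ → K) {s : Finset K}
    (hs : n < s.card) (h : ∀ b ∈ s, eval (b • R + P) f = 0) : eval R f = 0 := by
  set g : σ → MvPolynomial (Fin 2) K := fun i => C (R i) * X 0 + C (P i) * X 1
  set H := MvPolynomial.aeval g f
  have hevalH : ∀ u v : K, eval ![u, v] H = eval (u • R + v • P) f := fun u v => by
    rw [eval_aeval]
    congr
    funext i
    simp [g, mul_comm]
  have hH : H.IsHomogeneous n := by
    simpa only [one_mul] using
      hf.aeval g fun i => (isHomogeneous_C_mul_X _ 0).add (isHomogeneous_C_mul_X _ 1)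
  have hH0 : H = 0 :=
    hH.eq_zero_of_lt_card_of_eval_eq_zero hs fun b hb => by simpa [hevalH] using h b hb
  simpa [hH0] using (hevalH 1 0).symm

end MvPolynomial

section PointIdeal

variable {K : Type*} [Field K] {n : ℕ}

theorem pointIdeal_eq_ker [Infinite K] (p : Fin n → K) :
    pointIdeal p = RingHom.ker (rayEval p) := by
  ext f
  simp only [pointIdeal, Ideal.mem_iInf, RingHom.mem_ker]
  refine ⟨fun h => Polynomial.funext fun t => ?_, fun h t => ?_⟩
  · rw [eval_rayEval, h t, Polynomial.eval_zero]
  · rw [← eval_rayEval, h, Polynomial.eval_zero]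

theorem pointIdeal_isPrime_s18 [Infinite K] (p : Fin n → K) : (pointIdeal p).IsPrime := by
  rw [pointIdeal_eq_ker]
  exact RingHom.ker_isPrime _

theorem eval_homogeneousComponent_eq_zero_of_mem_pointIdeal [Infinite K] {p : Fin n → K}
    {f : MvPolynomial (Fin n) K} (hf : f ∈ pointIdeal p) (e : ℕ) :
    eval p (homogeneousComponent e f) = 0 := by
  rw [pointIdeal_eq_ker, RingHom.mem_ker] at hf
  rw [← coeff_rayEval, hf, Polynomial.coeff_zero]

theorem mem_pointIdeal_of_isHomogeneous {p : Fin n → K} {f : MvPolynomial (Fin n) K} {m : ℕ}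
    (hf : f.IsHomogeneous m) (h : eval p f = 0) : f ∈ pointIdeal p := by
  simp [pointIdeal, hf.eval_smul_s18, h]

end PointIdeal

section SymbolicPower

variable {R : Type*} [CommRing R]

theorem mem_assComplement_iInf {ι : Type*} {Q : ι → Ideal R} (hQ : ∀ i, (Q i).IsPrime)
    {u : R} (hu : ∀ i, u ∉ Q i) : u ∈ assComplement (⨅ i, Q i) := by
  rintro P ⟨hP, x, rfl⟩ ⟨N, hN⟩
  obtain ⟨f, rfl⟩ := Ideal.Quotient.mk_surjective x
  rw [Submodule.mem_colon_singleton, Submodule.mem_bot, Algebra.smul_def,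
    Ideal.Quotient.algebraMap_eq, ← map_mul, Ideal.Quotient.eq_zero_iff_mem] at hN
  have hf : f ∉ ⨅ i, Q i := fun hf => hP.ne_top <| (Ideal.eq_top_iff_one _).2
    ⟨1, by simp [Submodule.mem_colon_singleton, Ideal.Quotient.eq_zero_iff_mem.2 hf]⟩
  obtain ⟨i, hi⟩ : ∃ i, f ∉ Q i := by simpa [Ideal.mem_iInf] using hf
  exact hu i <| (hQ i).mem_of_pow_mem N <|
    ((hQ i).mem_or_mem (Ideal.mem_iInf.mp hN i)).resolve_right hi

theorem isCoprime_map_of_mem_sup {S : Type*} [CommRing S] (φ : R →+* S) {J J' : Ideal R}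
    {u : R} (hu : IsUnit (φ u)) (h : u ∈ J ⊔ J') : IsCoprime (J.map φ) (J'.map φ) := by
  rw [Ideal.isCoprime_iff_sup_eq, ← Ideal.map_sup]
  exact Ideal.eq_top_of_isUnit_mem _ (Ideal.mem_map_of_mem φ h) hu

theorem mem_symbolicPower_iInf {ι : Type*} [Fintype ι] {Q : ι → Ideal R}
    (hQ : ∀ i, (Q i).IsPrime) {u : R} (hu : ∀ i, u ∉ Q i)
    (hsup : Pairwise fun i j => u ∈ Q i ⊔ Q j) {x : R} {m : ℕ} (hx : ∀ i, x ∈ Q i ^ m) :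
    x ∈ symbolicPower (⨅ i, Q i) m := by
  -- Once `u` is inverted the `Q i` are pairwise comaximal, so `⨅ i, Q i ^ m = (∏ i, Q i) ^ m`.
  set φ := algebraMap R (Localization (assComplement (⨅ i, Q i)))
  have hunit : IsUnit (φ u) := IsLocalization.map_units _ ⟨u, mem_assComplement_iInf hQ hu⟩
  have hcop : ((Finset.univ : Finset ι) : Set ι).Pairwise
      (Function.onFun IsCoprime fun i => (Q i).map φ ^ m) :=
    fun i _ j _ hij => (isCoprime_map_of_mem_sup φ hunit (hsup hij)).pow
  have hmem : φ x ∈ ⨅ i ∈ Finset.univ, (Q i).map φ ^ m := by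
    simp only [Finset.mem_univ, iInf_pos, Ideal.mem_iInf]
    exact fun i => Ideal.map_pow φ (Q i) m ▸ Ideal.mem_map_of_mem φ (hx i)
  have hprod : ∏ i, (Q i).map φ = (∏ i, Q i).map φ := (map_prod (Ideal.mapHom φ) Q _).symm
  rw [← Ideal.prod_eq_iInf_of_pairwise_isCoprime hcop, Finset.prod_pow, hprod] at hmem
  rw [symbolicPower, Ideal.mem_comap, Ideal.map_pow]
  refine Ideal.pow_right_mono (Ideal.map_mono ?_) m hmem
  exact Ideal.prod_le_inf.trans (Finset.inf_univ_eq_iInf Q).le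

end SymbolicPower

namespace StarConfiguration

variable {K : Type*} [Field K]

/-- `starLine a` is the tangent line to the conic `X 1 ^ 2 = 4 * X 0 * X 2` at `(a ^ 2, -2 * a, 1)`,
and `starPoint a b` is the intersection of the tangents at the parameters `a` and `b`. -/
noncomputable def starLine (a : K) : MvPolynomial (Fin 3) K :=
  X 0 + C a * X 1 + C (a ^ 2) * X 2

def starPoint (a b : K) : Fin 3 → K := ![a * b, -(a + b), 1]

theorem starPoint_comm (a b : K) : starPoint a b = starPoint b a := by
  ext i
  fin_cases i <;> simp [starPoint] <;> ring

theorem starLine_isHomogeneous (a : K) : (starLine a).IsHomogeneous 1 :=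
  ((isHomogeneous_X K 0).add (isHomogeneous_C_mul_X a 1)).add (isHomogeneous_C_mul_X _ 2)

theorem eval_starPoint_starLine (a b e : K) :
    eval (starPoint a b) (starLine e) = (e - a) * (e - b) := by
  simp [starLine, starPoint]
  ring

theorem starLine_mem_pointIdeal (a b : K) : starLine a ∈ pointIdeal (starPoint a b) :=
  mem_pointIdeal_of_isHomogeneous (starLine_isHomogeneous a) (by simp [eval_starPoint_starLine])

theorem X_two_notMem_pointIdeal (a b : K) :
    (X 2 : MvPolynomial (Fin 3) K) ∉ pointIdeal (starPoint a b) :=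
  fun h => one_ne_zero (α := K) (by simpa [starPoint] using Ideal.mem_iInf.mp h (1 : K))

theorem C_mul_X_two_eq_starLine (a b c : K) :
    C ((a - b) * (a - c) * (b - c)) * X 2 =
      C (b - c) * starLine a - C (a - c) * starLine b + C (a - b) * starLine c := by
  simp only [starLine, map_mul, map_sub, map_pow]
  ring

theorem X_two_mem_sup {a b c : K} (hab : a ≠ b) (hac : a ≠ c) (hbc : b ≠ c)
    {J J' : Ideal (MvPolynomial (Fin 3) K)} (ha : starLine a ∈ J) (hb : starLine b ∈ J)
    (hc : starLine c ∈ J') : X 2 ∈ J ⊔ J' := by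
  have hunit : IsUnit (C ((a - b) * (a - c) * (b - c)) : MvPolynomial (Fin 3) K) :=
    (isUnit_iff_ne_zero.mpr (by simp [sub_ne_zero, hab, hac, hbc])).map C
  rw [← Ideal.unit_mul_mem_iff_mem _ hunit, C_mul_X_two_eq_starLine]
  exact add_mem (sub_mem (Ideal.mem_sup_left (Ideal.mul_mem_left _ _ ha))
    (Ideal.mem_sup_left (Ideal.mul_mem_left _ _ hb)))
    (Ideal.mem_sup_right (Ideal.mul_mem_left _ _ hc))

theorem eq_or_eq_of_projEq_starPoint {a b a' b' : K}
    (h : ProjEq (starPoint a b) (starPoint a' b')) :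
    (a = a' ∧ b = b') ∨ (a = b' ∧ b = a') := by
  obtain ⟨c, -, hc⟩ := h
  have h2 := congrFun hc 2
  have h0 := congrFun hc 0
  have h1 := congrFun hc 1
  simp only [starPoint, Pi.smul_apply, smul_eq_mul, Matrix.cons_val] at h0 h1 h2
  obtain rfl : c = 1 := by simpa using h2.symm
  have hsum : a + b = a' + b' := by linear_combination -h1
  have hprod : a * b = a' * b' := by linear_combination h0
  have hroot : (a - a') * (a - b') = 0 := by linear_combination a * hsum - hprod
  rcases mul_eq_zero.mp hroot with h | h
  · exact Or.inl ⟨sub_eq_zero.mp h, by linear_combination hsum - h⟩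
  · exact Or.inr ⟨sub_eq_zero.mp h, by linear_combination hsum - h⟩

theorem eval_one_zero_zero_eq_zero_of_forall_starPoint [Infinite K] {f : MvPolynomial (Fin 3) K}
    {e : ℕ} (hf : f.IsHomogeneous e) {s : Finset K} (hs : e + 1 < s.card)
    (h : ∀ a ∈ s, ∀ b ∈ s, a ≠ b → eval (starPoint a b) f = 0) :
    eval ![1, 0, 0] f = 0 := by
  classical
  -- On `starLine a` the form has the `e + 1` zeros `starPoint a b`, so it vanishes on the whole
  -- line, in particular where it meets `X 2 = 0`; then it has `e + 2` zeros on `X 2 = 0`.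
  have hline : ∀ a ∈ s, eval ![a, -1, 0] f = 0 := fun a ha => by
    refine hf.eval_eq_zero_of_eval_smul_add_eq_zero ![0, -a, 1] ![a, -1, 0] (s := s.erase a)
      (by rw [Finset.card_erase_of_mem ha]; omega) fun b hb => ?_
    have hpt : b • ![a, -1, 0] + ![0, -a, 1] = starPoint a b := by
      ext i
      fin_cases i <;> simp [starPoint, mul_comm, add_comm]
    rw [hpt]
    exact h a ha b (Finset.mem_of_mem_erase hb) (Finset.ne_of_mem_erase hb).symm
  refine hf.eval_eq_zero_of_eval_smul_add_eq_zero ![0, -1, 0] ![1, 0, 0] (s := s) (by omega)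
    fun a ha => ?_
  have hpt : a • ![1, 0, 0] + ![0, -1, 0] = ![a, -1, 0] := by
    ext i
    fin_cases i <;> simp
  rw [hpt]
  exact hline a ha

abbrev StarIndex (D : ℕ) := {q : Fin D × Fin D // q.1 < q.2}

variable {D : ℕ}

noncomputable def starIdeal (t : Fin D → K) : Ideal (MvPolynomial (Fin 3) K) :=
  ⨅ q : StarIndex D, pointIdeal (starPoint (t q.1.1) (t q.1.2))

noncomputable def starForm (t : Fin D → K) : MvPolynomial (Fin 3) K :=
  ∏ i, starLine (t i)

theorem not_projEq_starPoint {t : Fin D → K} (ht : Function.Injective t) {q q' : StarIndex D}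
    (hne : q ≠ q') :
    ¬ ProjEq (starPoint (t q.1.1) (t q.1.2)) (starPoint (t q'.1.1) (t q'.1.2)) := by
  intro h
  obtain ⟨⟨i, j⟩, hij⟩ := q
  obtain ⟨⟨i', j'⟩, hij'⟩ := q'
  rcases eq_or_eq_of_projEq_starPoint h with ⟨h1, h2⟩ | ⟨h1, h2⟩
  · exact hne (Subtype.ext (Prod.ext (ht h1) (ht h2)))
  · obtain rfl := ht h1
    obtain rfl := ht h2
    exact lt_asymm hij hij'

theorem X_two_mem_sup_pointIdeal {t : Fin D → K} (ht : Function.Injective t) {q q' : StarIndex D}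
    (hne : q ≠ q') :
    X 2 ∈ pointIdeal (starPoint (t q.1.1) (t q.1.2)) ⊔
      pointIdeal (starPoint (t q'.1.1) (t q'.1.2)) := by
  obtain ⟨l, hl, hl1, hl2⟩ :
      ∃ l, (l = q'.1.1 ∨ l = q'.1.2) ∧ l ≠ q.1.1 ∧ l ≠ q.1.2 := by
    obtain ⟨⟨i, j⟩, hij⟩ := q
    obtain ⟨⟨i', j'⟩, hij'⟩ := q'
    by_contra! H
    have := H i' (Or.inl rfl)
    have := H j' (Or.inr rfl)
    grind
  have hc : starLine (t l) ∈ pointIdeal (starPoint (t q'.1.1) (t q'.1.2)) := by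
    rcases hl with rfl | rfl
    · exact starLine_mem_pointIdeal _ _
    · rw [starPoint_comm]
      exact starLine_mem_pointIdeal _ _
  refine X_two_mem_sup (ht.ne q.2.ne) (ht.ne hl1.symm) (ht.ne hl2.symm)
    (starLine_mem_pointIdeal _ _) ?_ hc
  rw [starPoint_comm]
  exact starLine_mem_pointIdeal _ _

theorem starForm_mem_pointIdeal_sq (t : Fin D → K) {i j : Fin D} (hij : i ≠ j) :
    starForm t ∈ pointIdeal (starPoint (t i) (t j)) ^ 2 := by
  classical
  have hdvd : starLine (t i) * starLine (t j) ∣ starForm t := by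
    rw [← Finset.prod_pair (f := fun x => starLine (t x)) hij]
    exact Finset.prod_dvd_prod_of_subset _ _ _ (Finset.subset_univ _)
  refine Ideal.mem_of_dvd _ hdvd ?_
  rw [pow_two]
  exact Ideal.mul_mem_mul (starLine_mem_pointIdeal _ _)
    (starPoint_comm (t i) (t j) ▸ starLine_mem_pointIdeal _ _)

theorem starForm_pow_mem_symbolicPower [Infinite K] {t : Fin D → K} (ht : Function.Injective t)
    (k : ℕ) : starForm t ^ k ∈ symbolicPower (starIdeal t) (2 * k) :=
  mem_symbolicPower_iInf (fun _ => pointIdeal_isPrime_s18 _) (fun _ => X_two_notMem_pointIdeal _ _)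
    (fun _ _ hne => X_two_mem_sup_pointIdeal ht hne) fun q => by
      rw [pow_mul]
      exact Ideal.pow_mem_pow (starForm_mem_pointIdeal_sq t q.2.ne) k

theorem starIdeal_le_comap_rayEval [Infinite K] {d : ℕ} {t : Fin (d + 1) → K}
    (ht : Function.Injective t) :
    starIdeal t ≤ (Ideal.span {Polynomial.X ^ d}).comap (rayEval ![1, 0, 0]) := by
  classical
  intro f hf
  rw [Ideal.mem_comap, Ideal.mem_span_singleton, Polynomial.X_pow_dvd_iff]
  intro e he
  rw [coeff_rayEval]
  refine eval_one_zero_zero_eq_zero_of_forall_starPoint (homogeneousComponent_isHomogeneous e f)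
    (s := Finset.univ.image t) (by simp [Finset.card_image_of_injective _ ht]; omega) ?_
  simp only [Finset.mem_image, Finset.mem_univ, true_and]
  rintro _ ⟨i, rfl⟩ _ ⟨j, rfl⟩ hij
  rcases lt_or_gt_of_ne (ht.ne_iff.mp hij) with h | h
  · exact eval_homogeneousComponent_eq_zero_of_mem_pointIdeal
      (Ideal.mem_iInf.mp hf ⟨(i, j), h⟩) e
  · rw [starPoint_comm]
    exact eval_homogeneousComponent_eq_zero_of_mem_pointIdeal
      (Ideal.mem_iInf.mp hf ⟨(j, i), h⟩) e

theorem rayEval_starForm (t : Fin D → K) :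
    rayEval ![1, 0, 0] (starForm t) = Polynomial.X ^ D := by
  simp [starForm, rayEval, starLine]

theorem starForm_pow_notMem_pow [Infinite K] {d : ℕ} {t : Fin (d + 1) → K}
    (ht : Function.Injective t) {k r : ℕ} (hkr : (d + 1) * k < d * r) :
    starForm t ^ k ∉ starIdeal t ^ r := by
  intro hmem
  have h := Ideal.le_comap_pow _ r (Ideal.pow_right_mono (starIdeal_le_comap_rayEval ht) r hmem)
  rw [Ideal.mem_comap, Ideal.span_singleton_pow, Ideal.mem_span_singleton, map_pow,
    rayEval_starForm, ← pow_mul, ← pow_mul,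
    pow_dvd_pow_iff Polynomial.X_ne_zero Polynomial.not_isUnit_X] at h
  exact hkr.not_ge h

end StarConfiguration

theorem exists_exponents_of_lt_two {c : ℝ} (hc : c < 2) :
    ∃ d k r : ℕ, 0 < k ∧ 0 < r ∧ c ≤ 2 * k / r ∧ (d + 1) * k < d * r := by
  obtain ⟨d, hd⟩ := exists_nat_gt (max (c / (2 - c)) 0)
  have hd0 : 0 < d := by exact_mod_cast (le_max_right _ _).trans_lt hd
  have hδ : 0 < d * (2 - c) - c := by
    have h := (le_max_left _ _).trans_lt hd
    rw [div_lt_iff₀ (by linarith)] at h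
    linarith
  obtain ⟨N, hN⟩ := exists_nat_gt (max (c / (d * (2 - c) - c)) 0)
  have hN0 : 0 < N := by exact_mod_cast (le_max_right _ _).trans_lt hN
  refine ⟨d, d * N, (d + 1) * N + 1, by positivity, by positivity, ?_, by nlinarith⟩
  have h := (le_max_left _ _).trans_lt hN
  rw [div_lt_iff₀ hδ] at h
  rw [le_div_iff₀ (by positivity)]
  push_cast
  nlinarith

/-- there is no `c < 2` such that `I^(m) ⊆ I^r` holds for every radical
ideal of points `I` in `K[P^2]` and all positive `m, r` with `m/r ≥ c`. -/
theorem no_constant_lt_two {K : Type*} [Field K] [IsAlgClosed K] :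
    ¬ ∃ c : ℝ, c < 2 ∧ ∀ (n : ℕ) (p : Fin n → (Fin 3 → K)),
      (∀ i, p i ≠ 0) → (∀ i j, i ≠ j → ¬ ProjEq (p i) (p j)) →
      ∀ m r : ℕ, 0 < m → 0 < r → c ≤ (m : ℝ) / r →
        symbolicPower (⨅ i, pointIdeal (p i)) m ≤ (⨅ i, pointIdeal (p i)) ^ r := by
  rintro ⟨c, hc, hcont⟩
  obtain ⟨d, k, r, hk, hr, hckr, hkr⟩ := exists_exponents_of_lt_two hc
  obtain ⟨t, ht⟩ : ∃ t : Fin (d + 1) → K, Function.Injective t :=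
    ⟨_, (Infinite.natEmbedding K).injective.comp Fin.val_injective⟩
  obtain ⟨n, ⟨e⟩⟩ := Finite.exists_equiv_fin (StarConfiguration.StarIndex (d + 1))
  let p i := StarConfiguration.starPoint (t (e.symm i).1.1) (t (e.symm i).1.2)
  have hI : ⨅ i, pointIdeal (p i) = StarConfiguration.starIdeal t :=
    e.symm.iInf_comp (g := fun q : StarConfiguration.StarIndex (d + 1) =>
      pointIdeal (StarConfiguration.starPoint (t q.1.1) (t q.1.2)))
  have hcontain := hcont n p (fun i h => one_ne_zero (α := K) (congrFun h 2))
    (fun i j hij => StarConfiguration.not_projEq_starPoint ht (e.symm.injective.ne hij))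
    (2 * k) r (by omega) hr (by push_cast; exact hckr)
  rw [hI] at hcontain
  exact StarConfiguration.starForm_pow_notMem_pow ht hkr
    (hcontain (StarConfiguration.starForm_pow_mem_symbolicPower ht k))
end
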